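/- Let G be a class 2 graph with maximum degree Δ, rs₁ ∈ E(G), φ a proper edge Δ-coloring of G − rs₁, and F = (r, rs₁, s₁, …, rs_p, s_p) a multifan. Then for any color α missing at r and any color β missing at some s_i, the vertices r and s_i lie in the same (α,β)-chain of G − rs₁ (they are (α,β)-linked). -/

import Mathlib

/-!
Since `G` is class 2, no colour is missing both at `r` and at the end `tₘ` of a linear sequence
`s₁ = t₀, t₁, …, tₘ` of the multifan (each edge `r tⱼ₊₁` coloured with a colour missing at `tⱼ`):
otherwise recolouring every `r tⱼ` with `φ(r tⱼ₊₁)`, and `r tₘ` with that colour, would colour `G`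
with `Δ` colours. If `r` and `sᵢ = tₘ` were not `(α, β)`-linked, interchanging `α` and `β` on the
chain through `sᵢ` would keep `α` missing at `r` and make it missing at `sᵢ`. So the interchange
must destroy the sequence, which only happens if `φ(r tⱼ₊₁) = β` for some `tⱼ` on that chain;
but then `β` is missing at `tⱼ`, and induction on `m` links `r` to `tⱼ`, hence to `sᵢ`.
-/

open SimpleGraph

/-- A proper edge `k`-coloring of `G` with colors in `[1, k]`. -/
def IsProperEdgeColoring {V : Type*} (G : SimpleGraph V) (k : ℕ) (c : Sym2 V → ℕ) : Prop :=
  (∀ e ∈ G.edgeSet, c e ∈ Finset.Icc 1 k) ∧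
  ∀ e ∈ G.edgeSet, ∀ f ∈ G.edgeSet, e ≠ f → (∃ v : V, v ∈ e ∧ v ∈ f) → c e ≠ c f

/-- `G` has a proper edge coloring with `k` colors. -/
def EdgeColorable {V : Type*} (G : SimpleGraph V) (k : ℕ) : Prop :=
  ∃ c : Sym2 V → ℕ, IsProperEdgeColoring G k c

/-- The set of colors of `[1, k]` missing at `v`. -/
def missingColors {V : Type*} (G : SimpleGraph V) (k : ℕ) (c : Sym2 V → ℕ) (v : V) : Set ℕ :=
  {α | α ∈ Finset.Icc 1 k ∧ ¬ ∃ e ∈ G.edgeSet, v ∈ e ∧ c e = α}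

/-- The subgraph of `G` consisting of the edges colored `α` or `β`;
its components are the `(α, β)`-chains. -/
def chainGraph {V : Type*} (G : SimpleGraph V) (c : Sym2 V → ℕ) (α β : ℕ) : SimpleGraph V :=
  SimpleGraph.fromEdgeSet {e ∈ G.edgeSet | c e = α ∨ c e = β}

theorem Finset.swap_apply_mem_iff {α : Type*} [DecidableEq α] {s : Finset α} {a b x : α}
    (ha : a ∈ s) (hb : b ∈ s) : Equiv.swap a b x ∈ s ↔ x ∈ s := by
  rw [Equiv.swap_apply_def]
  split_ifs with h₁ h₂ <;> subst_vars <;> simp [ha, hb]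

theorem IsBot.exists_strictMonoOn_chain {α : Type*} [PartialOrder α] [WellFoundedLT α]
    {R : α → α → Prop} {a : α} (ha : IsBot a) (hR : ∀ i, a < i → ∃ j < i, R j i) (i : α) :
    ∃ (m : ℕ) (σ : ℕ → α), σ 0 = a ∧ σ m = i ∧ StrictMonoOn σ (Set.Iic m) ∧
      ∀ j < m, R (σ j) (σ (j + 1)) := by
  induction i using WellFoundedLT.induction with
  | _ i ih =>
  rcases (ha i).eq_or_lt with rfl | hai
  · refine ⟨0, fun _ => a, rfl, rfl, fun j hj l hl hjl => ?_, fun j hj => absurd hj j.not_lt_zero⟩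
    simp only [Set.mem_Iic] at hj hl
    omega
  obtain ⟨j, hji, hRji⟩ := hR i hai
  obtain ⟨m, σ, hσ0, hσm, hσ, hσR⟩ := ih j hji
  refine ⟨m + 1, Function.update σ (m + 1) i, ?_, by simp, ?_, fun l hl => ?_⟩
  · rwa [Function.update_of_ne m.succ_ne_zero.symm]
  · intro l hl n hn hln
    simp only [Set.mem_Iic] at hl hn
    rw [Function.update_of_ne (by omega)]
    rcases hn.lt_or_eq with hn | rfl
    · rw [Function.update_of_ne hn.ne]
      exact hσ (show l ≤ m by omega) (show n ≤ m by omega) hln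
    · rw [Function.update_self]
      exact (hσ.monotoneOn (show l ≤ m by omega) (le_refl m) (by omega)).trans_lt (hσm ▸ hji)
  · rw [Function.update_of_ne (by omega)]
    rcases (Nat.lt_succ_iff.mp hl).lt_or_eq with hl | rfl
    · rw [Function.update_of_ne (by omega)]
      exact hσR l hl
    · rw [Function.update_self, hσm]
      exact hRji

section EdgeColouring

variable {V : Type*}

section Recolouring

variable {H : SimpleGraph V} {k : ℕ} {c : Sym2 V → ℕ}

theorem IsProperEdgeColoring.anti {H' : SimpleGraph V} (hc : IsProperEdgeColoring H k c)
    (hle : H' ≤ H) : IsProperEdgeColoring H' k c :=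
  ⟨fun e he => hc.1 e (edgeSet_mono hle he),
    fun e he f hf => hc.2 e (edgeSet_mono hle he) f (edgeSet_mono hle hf)⟩

theorem missingColors_anti {H' : SimpleGraph V} (hle : H' ≤ H) (v : V) :
    missingColors H k c v ⊆ missingColors H' k c v :=
  fun _ ⟨hγ, hno⟩ => ⟨hγ, fun ⟨e, he, hve, hce⟩ => hno ⟨e, edgeSet_mono hle he, hve, hce⟩⟩

theorem missingColors_congr {c' : Sym2 V → ℕ} {v : V}
    (h : ∀ e ∈ H.edgeSet, v ∈ e → c' e = c e) :
    missingColors H k c' v = missingColors H k c v := by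
  ext γ
  exact and_congr_right' (not_congr (exists_congr fun e => and_congr_right fun he =>
    and_congr_right fun hve => by rw [h e he hve]))

theorem missingColors_update_of_notMem [DecidableEq V] {e : Sym2 V} {v : V} (hv : v ∉ e) (γ : ℕ) :
    missingColors H k (Function.update c e γ) v = missingColors H k c v :=
  missingColors_congr fun _ _ hve => Function.update_of_ne (ne_of_mem_of_not_mem' hve hv) _ _

theorem isProperEdgeColoring_update [DecidableEq V] {u v : V} {γ : ℕ}
    (hc : IsProperEdgeColoring (H.deleteEdges {s(u, v)}) k c)
    (hu : γ ∈ missingColors (H.deleteEdges {s(u, v)}) k c u)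
    (hv : γ ∈ missingColors (H.deleteEdges {s(u, v)}) k c v) :
    IsProperEdgeColoring H k (Function.update c s(u, v) γ) := by
  have hdel : ∀ e ∈ H.edgeSet, e ≠ s(u, v) → e ∈ (H.deleteEdges {s(u, v)}).edgeSet :=
    fun e he hne => by simp [edgeSet_deleteEdges, he, hne]
  have hnew : ∀ f ∈ H.edgeSet, f ≠ s(u, v) → ∀ w ∈ s(u, v), w ∈ f → γ ≠ c f := by
    intro f hf hne w hw hwf hγ
    rcases Sym2.mem_iff.mp hw with rfl | rfl
    · exact hu.2 ⟨f, hdel f hf hne, hwf, hγ.symm⟩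
    · exact hv.2 ⟨f, hdel f hf hne, hwf, hγ.symm⟩
  refine ⟨fun e he => ?_, ?_⟩
  · by_cases h : e = s(u, v)
    · subst h
      simpa using hu.1
    · rw [Function.update_of_ne h]
      exact hc.1 e (hdel e he h)
  · rintro e he f hf hef ⟨w, hwe, hwf⟩
    by_cases h₁ : e = s(u, v) <;> by_cases h₂ : f = s(u, v)
    · exact absurd (h₁.trans h₂.symm) hef
    · subst h₁
      rw [Function.update_self, Function.update_of_ne h₂]
      exact hnew f hf h₂ w hwe hwf
    · subst h₂
      rw [Function.update_self, Function.update_of_ne h₁]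
      exact (hnew e he h₁ w hwf hwe).symm
    · rw [Function.update_of_ne h₁, Function.update_of_ne h₂]
      exact hc.2 e (hdel e he h₁) f (hdel f hf h₂) hef ⟨w, hwe, hwf⟩

theorem apply_mem_missingColors_update [DecidableEq V] {r u : V} {γ : ℕ}
    (hc : IsProperEdgeColoring H k c) (he : s(r, u) ∈ H.edgeSet) (hγ : γ ∈ missingColors H k c r) :
    c s(r, u) ∈ missingColors H k (Function.update c s(r, u) γ) r := by
  refine ⟨hc.1 _ he, fun ⟨f, hf, hrf, hcf⟩ => ?_⟩
  by_cases h : f = s(r, u)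
  · subst h
    rw [Function.update_self] at hcf
    exact hγ.2 ⟨_, he, Sym2.mem_mk_left _ _, hcf.symm⟩
  · rw [Function.update_of_ne h] at hcf
    exact hc.2 f hf _ he h ⟨r, hrf, Sym2.mem_mk_left _ _⟩ hcf

end Recolouring

section Kempe

variable {H : SimpleGraph V} {c : Sym2 V → ℕ} {α β : ℕ}

theorem reachable_chainGraph_of_mem {e : Sym2 V} (he : e ∈ H.edgeSet) (hce : c e = α ∨ c e = β)
    {u v : V} (hu : u ∈ e) (hv : v ∈ e) : (chainGraph H c α β).Reachable u v := by
  induction e using Sym2.ind with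
  | _ x y =>
  have hxy : (chainGraph H c α β).Adj x y := by
    rw [chainGraph, fromEdgeSet_adj]
    exact ⟨⟨he, hce⟩, H.ne_of_adj he⟩
  rcases Sym2.mem_iff.mp hu with rfl | rfl <;> rcases Sym2.mem_iff.mp hv with rfl | rfl
  exacts [.refl _, hxy.reachable, hxy.symm.reachable, .refl _]

open Classical in
/-- The Kempe change interchanging `α` and `β` on the `(α, β)`-chain through `x`. Every edge
meeting the chain is passed through `Equiv.swap α β`, which moves exactly the chain's edges. -/
noncomputable def kempeSwap (H : SimpleGraph V) (c : Sym2 V → ℕ) (α β : ℕ) (x : V)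
    (e : Sym2 V) : ℕ :=
  if ∃ v ∈ e, (chainGraph H c α β).Reachable x v then Equiv.swap α β (c e) else c e

theorem kempeSwap_of_reachable {x v : V} {e : Sym2 V} (hv : v ∈ e)
    (hxv : (chainGraph H c α β).Reachable x v) :
    kempeSwap H c α β x e = Equiv.swap α β (c e) :=
  if_pos ⟨v, hv, hxv⟩

theorem kempeSwap_of_not_reachable {x v : V} {e : Sym2 V} (he : e ∈ H.edgeSet) (hv : v ∈ e)
    (hxv : ¬ (chainGraph H c α β).Reachable x v) : kempeSwap H c α β x e = c e := by
  unfold kempeSwap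
  split_ifs with h
  · obtain ⟨u, hu, hxu⟩ := h
    refine Equiv.swap_apply_of_ne_of_ne ?_ ?_ <;> intro hce <;>
      exact hxv (hxu.trans (reachable_chainGraph_of_mem he (by simp [hce]) hu hv))
  · rfl

variable {k : ℕ}

theorem isProperEdgeColoring_kempeSwap (hc : IsProperEdgeColoring H k c)
    (hα : α ∈ Finset.Icc 1 k) (hβ : β ∈ Finset.Icc 1 k) (x : V) :
    IsProperEdgeColoring H k (kempeSwap H c α β x) := by
  refine ⟨fun e he => ?_, ?_⟩
  · unfold kempeSwap
    split_ifs
    · exact (Finset.swap_apply_mem_iff hα hβ).mpr (hc.1 e he)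
    · exact hc.1 e he
  · rintro e he f hf hef ⟨v, hve, hvf⟩
    by_cases hxv : (chainGraph H c α β).Reachable x v
    · rw [kempeSwap_of_reachable hve hxv, kempeSwap_of_reachable hvf hxv]
      exact (Equiv.swap α β).injective.ne (hc.2 e he f hf hef ⟨v, hve, hvf⟩)
    · rw [kempeSwap_of_not_reachable he hve hxv, kempeSwap_of_not_reachable hf hvf hxv]
      exact hc.2 e he f hf hef ⟨v, hve, hvf⟩

theorem mem_missingColors_kempeSwap_of_reachable (hα : α ∈ Finset.Icc 1 k)
    (hβ : β ∈ Finset.Icc 1 k) {x v : V} (hxv : (chainGraph H c α β).Reachable x v) {γ : ℕ} :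
    γ ∈ missingColors H k (kempeSwap H c α β x) v ↔
      Equiv.swap α β γ ∈ missingColors H k c v := by
  refine and_congr (Finset.swap_apply_mem_iff hα hβ).symm (not_congr (exists_congr fun e =>
    and_congr_right fun _ => and_congr_right fun hve => ?_))
  rw [kempeSwap_of_reachable hve hxv, Equiv.swap_apply_eq_iff]

theorem missingColors_kempeSwap_of_not_reachable {x v : V}
    (hxv : ¬ (chainGraph H c α β).Reachable x v) :
    missingColors H k (kempeSwap H c α β x) v = missingColors H k c v :=
  missingColors_congr fun _ he hve => kempeSwap_of_not_reachable he hve hxv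

end Kempe

/-- `(r, r t₀, t₀, …, r tₘ, tₘ)` is a linear sequence of a multifan at `r` for the colouring `c`
of `G - r s`, where `s = t₀`. -/
structure IsFanPath (G : SimpleGraph V) (k : ℕ) (c : Sym2 V → ℕ) (r s : V) (t : ℕ → V) (m : ℕ) :
    Prop where
  zero : t 0 = s
  adj : ∀ j ≤ m, G.Adj r (t j)
  injOn : Set.InjOn t (Set.Iic m)
  missing : ∀ j < m, c s(r, t (j + 1)) ∈ missingColors (G.deleteEdges {s(r, s)}) k c (t j)

namespace IsFanPath

variable {G : SimpleGraph V} {k : ℕ} {c : Sym2 V → ℕ} {r s : V} {t : ℕ → V} {m : ℕ}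

theorem of_le (h : IsFanPath G k c r s t m) {j : ℕ} (hj : j ≤ m) : IsFanPath G k c r s t j :=
  ⟨h.zero, fun l hl => h.adj l (hl.trans hj), h.injOn.mono (Set.Iic_subset_Iic.mpr hj),
    fun l hl => h.missing l (hl.trans_le hj)⟩

theorem notMem_edge (h : IsFanPath G k c r s t m) {j l : ℕ} (hj : j ≤ m) (hl : l ≤ m)
    (hjl : j ≠ l) : t j ∉ s(r, t l) := by
  rw [Sym2.mem_iff, not_or]
  exact ⟨(h.adj j hj).ne', fun heq => hjl (h.injOn hj hl heq)⟩

theorem edge_ne (h : IsFanPath G k c r s t m) {j l : ℕ} (hj : j ≤ m) (hl : l ≤ m)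
    (hjl : j ≠ l) : s(r, t j) ≠ s(r, t l) :=
  fun heq => h.notMem_edge hj hl hjl (heq ▸ Sym2.mem_mk_right _ _)

theorem edge_mem (h : IsFanPath G k c r s t m) {j : ℕ} (hj₀ : j ≠ 0) (hj : j ≤ m) :
    s(r, t j) ∈ (G.deleteEdges {s(r, s)}).edgeSet := by
  rw [edgeSet_deleteEdges, ← h.zero]
  exact ⟨h.adj j hj, h.edge_ne hj (Nat.zero_le m) hj₀⟩

theorem edgeColorable (h : IsFanPath G k c r s t m)
    (hc : IsProperEdgeColoring (G.deleteEdges {s(r, s)}) k c) {γ : ℕ}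
    (hγr : γ ∈ missingColors (G.deleteEdges {s(r, s)}) k c r)
    (hγt : γ ∈ missingColors (G.deleteEdges {s(r, s)}) k c (t m)) : EdgeColorable G k := by
  classical
  induction m generalizing c γ with
  | zero =>
    rw [h.zero] at hγt
    exact ⟨_, isProperEdgeColoring_update hc hγr hγt⟩
  | succ m ih =>
    have hle := deleteEdges_le (G := G.deleteEdges {s(r, s)}) {s(r, t (m + 1))}
    have hc' := isProperEdgeColoring_update (hc.anti hle) (missingColors_anti hle r hγr)
      (missingColors_anti hle _ hγt)
    have hpath : IsFanPath G k (Function.update c s(r, t (m + 1)) γ) r s t m := by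
      refine ⟨h.zero, fun j hj => h.adj j (by omega), h.injOn.mono (by simp), fun j hj => ?_⟩
      rw [Function.update_of_ne (h.edge_ne (by omega) le_rfl (by omega)),
        missingColors_update_of_notMem (h.notMem_edge (by omega) le_rfl (by omega))]
      exact h.missing j (by omega)
    refine ih hpath hc' (apply_mem_missingColors_update hc (h.edge_mem (by omega) le_rfl) hγr) ?_
    rw [missingColors_update_of_notMem (h.notMem_edge (by omega) le_rfl (by omega))]
    exact h.missing m m.lt_succ_self

theorem reachable_chainGraph (h : IsFanPath G k c r s t m) (hG : ¬ EdgeColorable G k)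
    (hc : IsProperEdgeColoring (G.deleteEdges {s(r, s)}) k c) {α β : ℕ}
    (hα : α ∈ missingColors (G.deleteEdges {s(r, s)}) k c r)
    (hβ : β ∈ missingColors (G.deleteEdges {s(r, s)}) k c (t m)) :
    (chainGraph (G.deleteEdges {s(r, s)}) c α β).Reachable r (t m) := by
  induction m using Nat.strong_induction_on generalizing β with
  | _ m ih =>
  by_contra hne
  have hr : ¬ (chainGraph (G.deleteEdges {s(r, s)}) c α β).Reachable (t m) r :=
    fun h' => hne h'.symm
  by_cases hbreak : ∃ j < m,
      (chainGraph (G.deleteEdges {s(r, s)}) c α β).Reachable (t m) (t j) ∧ c s(r, t (j + 1)) = β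
  · obtain ⟨j, hjm, hj, hjβ⟩ := hbreak
    exact hne ((ih j hjm (h.of_le hjm.le) (hjβ ▸ h.missing j hjm)).trans hj.symm)
  push Not at hbreak
  refine hG (IsFanPath.edgeColorable (γ := α) ⟨h.zero, h.adj, h.injOn, fun j hjm => ?_⟩
    (isProperEdgeColoring_kempeSwap hc hα.1 hβ.1 (t m))
    (by rwa [missingColors_kempeSwap_of_not_reachable hr]) ?_)
  · have hedge := h.edge_mem (j := j + 1) (by omega) (by omega)
    have hδα : c s(r, t (j + 1)) ≠ α := fun heq => hα.2 ⟨_, hedge, Sym2.mem_mk_left _ _, heq⟩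
    rw [kempeSwap_of_not_reachable hedge (Sym2.mem_mk_left _ _) hr]
    by_cases hj : (chainGraph (G.deleteEdges {s(r, s)}) c α β).Reachable (t m) (t j)
    · rw [mem_missingColors_kempeSwap_of_reachable hα.1 hβ.1 hj,
        Equiv.swap_apply_of_ne_of_ne hδα (hbreak j hjm hj)]
      exact h.missing j hjm
    · rw [missingColors_kempeSwap_of_not_reachable hj]
      exact h.missing j hjm
  · rw [mem_missingColors_kempeSwap_of_reachable hα.1 hβ.1 .rfl, Equiv.swap_apply_left]
    exact hβ

end IsFanPath

end EdgeColouring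

open Classical in
theorem stmt_16_general {V : Type*} [Fintype V] (G : SimpleGraph V)
    (hclass2b : ¬ EdgeColorable G G.maxDegree)
    (r : V) (p : ℕ) (hp : 0 < p) (f : Fin p → V)
    (hinj : Function.Injective f)
    (hadj : ∀ i, G.Adj r (f i))
    (c : Sym2 V → ℕ)
    (hc : IsProperEdgeColoring (G.deleteEdges {s(r, f ⟨0, hp⟩)}) G.maxDegree c)
    (hfan : ∀ i : Fin p, 0 < (i : ℕ) → ∃ j : Fin p, (j : ℕ) < (i : ℕ) ∧
      c (s(r, f i)) ∈
        missingColors (G.deleteEdges {s(r, f ⟨0, hp⟩)}) G.maxDegree c (f j)) :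
    ∀ α ∈ missingColors (G.deleteEdges {s(r, f ⟨0, hp⟩)}) G.maxDegree c r,
      ∀ i : Fin p,
        ∀ β ∈ missingColors (G.deleteEdges {s(r, f ⟨0, hp⟩)}) G.maxDegree c (f i),
          (chainGraph (G.deleteEdges {s(r, f ⟨0, hp⟩)}) c α β).Reachable r (f i) := by
  intro α hα i β hβ
  obtain ⟨m, σ, hσ0, hσm, hσ, hσfan⟩ :=
    IsBot.exists_strictMonoOn_chain (a := (⟨0, hp⟩ : Fin p)) (fun j => Nat.zero_le j) hfan i
  have hpath : IsFanPath G G.maxDegree c r (f ⟨0, hp⟩) (f ∘ σ) m :=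
    ⟨by simp [hσ0], fun j _ => hadj _, hinj.comp_injOn hσ.injOn, hσfan⟩
  simpa [hσm] using hpath.reachable_chainGraph hclass2b hc hα (by simpa [hσm] using hβ)

open Classical in
theorem stmt_16 {V : Type*} [Fintype V] (G : SimpleGraph V)
    (hclass2a : EdgeColorable G (G.maxDegree + 1))
    (hclass2b : ¬ EdgeColorable G G.maxDegree)
    (r : V) (p : ℕ) (hp : 0 < p) (f : Fin p → V)
    (hinj : Function.Injective f) (hr : ∀ i, f i ≠ r)
    (hadj : ∀ i, G.Adj r (f i))
    (c : Sym2 V → ℕ)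
    (hc : IsProperEdgeColoring (G.deleteEdges {s(r, f ⟨0, hp⟩)}) G.maxDegree c)
    (hfan : ∀ i : Fin p, 0 < (i : ℕ) → ∃ j : Fin p, (j : ℕ) < (i : ℕ) ∧
      c (s(r, f i)) ∈
        missingColors (G.deleteEdges {s(r, f ⟨0, hp⟩)}) G.maxDegree c (f j)) :
    ∀ α ∈ missingColors (G.deleteEdges {s(r, f ⟨0, hp⟩)}) G.maxDegree c r,
      ∀ i : Fin p,
        ∀ β ∈ missingColors (G.deleteEdges {s(r, f ⟨0, hp⟩)}) G.maxDegree c (f i),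
          (chainGraph (G.deleteEdges {s(r, f ⟨0, hp⟩)}) c α β).Reachable r (f i) :=
  stmt_16_general G hclass2b r p hp f hinj hadj c hc hfan
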